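/- arXiv:1611.02327 — 6 statements merged into one kernel-verified Lean document; each statement's English description precedes it below -/
import Mathlib

section
/- Let T : X ⇉ X* be a multivalued operator, (x,x*) ∈ T^ρ, (y,y*) ∈ T and t, s > 0. Then (x, t·x*) ∼_p (y, s·y*). -/
open NormedSpace

section PseudoDefs

variable {X : Type*} [NormedAddCommGroup X] [NormedSpace ℝ X]

/-- `(x,x*) ∼_p (y,y*)`: the pseudomonotone relation. -/
def PseudoRel (p q : X × StrongDual ℝ X) : Prop :=
  min (q.2 (p.1 - q.1)) (p.2 (q.1 - p.1)) < 0 ∨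
    (q.2 (p.1 - q.1) = 0 ∧ p.2 (q.1 - p.1) = 0)

/-- An operator (identified with its graph) is pseudomonotone if any two of its
elements are pseudomonotonically related. -/
def Pseudomonotone (T : Set (X × StrongDual ℝ X)) : Prop :=
  ∀ p ∈ T, ∀ q ∈ T, PseudoRel p q

/-- The pseudomonotone polar `T^ρ`. -/
def pPolar (T : Set (X × StrongDual ℝ X)) : Set (X × StrongDual ℝ X) :=
  {p | ∀ q ∈ T, PseudoRel p q}

/-- The monotone polar `T^μ`. -/
def mPolar (T : Set (X × StrongDual ℝ X)) : Set (X × StrongDual ℝ X) :=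
  {p | ∀ q ∈ T, 0 ≤ (p.2 - q.2) (p.1 - q.1)}

/-- A monotone operator. -/
def MonotoneOp (T : Set (X × StrongDual ℝ X)) : Prop :=
  ∀ p ∈ T, ∀ q ∈ T, 0 ≤ (p.2 - q.2) (p.1 - q.1)

/-- The image `T(x)` of an operator at a point. -/
def img (T : Set (X × StrongDual ℝ X)) (x : X) : Set (StrongDual ℝ X) :=
  {x' | (x, x') ∈ T}

/-- The domain of an operator. -/
def opDom (T : Set (X × StrongDual ℝ X)) : Set X :=
  {x | (img T x).Nonempty}

/-- The set of zeros `Z_T` of an operator. -/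
def zeros (T : Set (X × StrongDual ℝ X)) : Set X :=
  {x | (x, (0 : StrongDual ℝ X)) ∈ T}

/-- The strict conic hull `cone_∘(A)` of a subset of the dual. -/
def coneS (A : Set (StrongDual ℝ X)) : Set (StrongDual ℝ X) :=
  {v | ∃ t : ℝ, 0 < t ∧ ∃ a ∈ A, v = t • a}

/-- The conic hull `cone(A)` of a subset of the dual. -/
def coneH (A : Set (StrongDual ℝ X)) : Set (StrongDual ℝ X) :=
  {v | ∃ t : ℝ, 0 ≤ t ∧ ∃ a ∈ A, v = t • a}

/-- The operator `cone_∘(T)`, with `(cone_∘(T))(x) = cone_∘(T(x))`. -/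
def coneOp (T : Set (X × StrongDual ℝ X)) : Set (X × StrongDual ℝ X) :=
  {p | p.2 ∈ coneS (img T p.1)}

/-- The normal cone `N_C(x)`. -/
def normalCone (C : Set X) (x : X) : Set (StrongDual ℝ X) :=
  {x' | ∀ y ∈ C, x' (y - x) ≤ 0}

/-- The strict normal cone `N°_C(x)`. -/
def strictNormalCone (C : Set X) (x : X) : Set (StrongDual ℝ X) :=
  {x' | ∀ y ∈ C, x' (y - x) < 0}

/-- `V_T(x) = {y : ∃ y* ∈ T(y), ⟨x - y, y*⟩ > 0}`. -/
def Vset (T : Set (X × StrongDual ℝ X)) (x : X) : Set X :=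
  {y | ∃ y' ∈ img T y, 0 < y' (x - y)}

/-- `W_T(x) = {y : ∃ y* ∈ T(y), ⟨x - y, y*⟩ = 0}`. -/
def Wset (T : Set (X × StrongDual ℝ X)) (x : X) : Set X :=
  {y | ∃ y' ∈ img T y, y' (x - y) = 0}

/-- Maximal pseudomonotonicity. -/
def MaxPseudomonotone (T : Set (X × StrongDual ℝ X)) : Prop :=
  Pseudomonotone T ∧ ∀ S : Set (X × StrongDual ℝ X), T ⊆ S → Pseudomonotone S → T = S

/-- Pre-maximal pseudomonotonicity: both `T` and `T^ρ` are pseudomonotone. -/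
def PreMaxPseudomonotone (T : Set (X × StrongDual ℝ X)) : Prop :=
  Pseudomonotone T ∧ Pseudomonotone (pPolar T)

/-- The restriction `T|_A` of an operator to a set `A`. -/
def restrictOp (T : Set (X × StrongDual ℝ X)) (A : Set X) : Set (X × StrongDual ℝ X) :=
  {p ∈ T | p.1 ∈ A}

/-- `L(T,x) = {y : ∃ y* ∈ T(y), ⟨x - y, y*⟩ ≥ 0}`. -/
def Lset (T : Set (X × StrongDual ℝ X)) (x : X) : Set X :=
  {y | ∃ y' ∈ img T y, 0 ≤ y' (x - y)}

/-- The operator `T̂ `: `T̂(x) = N_{L(T,x)}(x)` on `Z_T`, `cone_∘(T(x))` on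
`dom(T) \ Z_T`, and `∅` outside `dom(T)`. -/
def hatOp (T : Set (X × StrongDual ℝ X)) : Set (X × StrongDual ℝ X) :=
  {p | (p.1 ∈ zeros T ∧ p.2 ∈ normalCone (Lset T p.1) p.1) ∨
       (p.1 ∈ opDom T ∧ p.1 ∉ zeros T ∧ p.2 ∈ coneS (img T p.1))}

/-- Two operators are equivalent: same domain, same zeros, and the same conic
hulls of images outside the set of zeros. -/
def EquivOp (T S : Set (X × StrongDual ℝ X)) : Prop :=
  opDom T = opDom S ∧ zeros T = zeros S ∧
    ∀ x ∈ opDom T \ zeros T, coneH (img T x) = coneH (img S x)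

/-- `D`-maximal pseudomonotonicity (Hadjisavvas): `T` is pseudomonotone and some
equivalent pseudomonotone operator has no proper pseudomonotone extension with
the same domain. -/
def DMaxPseudomonotone (T : Set (X × StrongDual ℝ X)) : Prop :=
  Pseudomonotone T ∧ ∃ S : Set (X × StrongDual ℝ X), EquivOp T S ∧ Pseudomonotone S ∧
    ∀ S' : Set (X × StrongDual ℝ X), S ⊆ S' → Pseudomonotone S' → opDom S' = opDom S → S' = S

/-- The solution set of the Stampacchia variational inequality problem. -/
def SVIsol (T : Set (X × StrongDual ℝ X)) (K : Set X) : Set X :=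
  {x ∈ K | ∃ x' ∈ img T x, ∀ y ∈ K, 0 ≤ x' (y - x)}

/-- The solution set of the Minty variational inequality problem. -/
def MVIsol (T : Set (X × StrongDual ℝ X)) (K : Set X) : Set X :=
  {x ∈ K | ∀ q ∈ T, q.1 ∈ K → q.2 (x - q.1) ≤ 0}

/-- The linear perturbation `T + α*`. -/
def pertOp (T : Set (X × StrongDual ℝ X)) (α : StrongDual ℝ X) : Set (X × StrongDual ℝ X) :=
  {p | ∃ q ∈ T, p = (q.1, q.2 + α)}

end PseudoDefs

theorem PseudoRel.smul_smul {X : Type*} [NormedAddCommGroup X] [NormedSpace ℝ X]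
    {p q : X × StrongDual ℝ X} {t s : ℝ} (ht : 0 < t) (hs : 0 < s) (h : PseudoRel p q) :
    PseudoRel (p.1, t • p.2) (q.1, s • q.2) := by
  simpa only [PseudoRel, min_lt_iff, smul_apply, smul_neg_iff_of_pos_left hs,
    smul_neg_iff_of_pos_left ht, smul_eq_zero, hs.ne', ht.ne', false_or] using h

theorem pseudoRel_smul_of_mem_pPolar
    {X : Type*} [NormedAddCommGroup X] [NormedSpace ℝ X]
    (T : Set (X × StrongDual ℝ X)) (x y : X) (xs ys : StrongDual ℝ X) (t s : ℝ)
    (hx : (x, xs) ∈ pPolar T) (hy : (y, ys) ∈ T) (ht : 0 < t) (hs : 0 < s) :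
    PseudoRel (x, t • xs) (y, s • ys) :=
  (hx (y, ys) hy).smul_smul ht hs
end

section
/- Let T : X ⇉ X* be a multivalued operator. Then the set of zeros Z_{T^ρ} of its pseudomonotone polar is convex and closed in the weak topology σ(X, X*). -/
open NormedSpace

/-! A pair `(x, 0)` is pseudomonotonically related to `(y, y*)` exactly when `⟨x - y, y*⟩ ≤ 0`,
so `Z_{T^ρ}` is the intersection of the closed half-spaces `{x | ⟨x, y*⟩ ≤ ⟨y, y*⟩}` over
`(y, y*) ∈ T`. Each of them is convex and, being cut out by a continuous functional, weakly
closed. -/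

section ZerosOfPolar

variable {X : Type*} [NormedAddCommGroup X] [NormedSpace ℝ X]

theorem pseudoRel_zero_left_iff (x : X) (q : X × StrongDual ℝ X) :
    PseudoRel (x, 0) q ↔ q.2 x ≤ q.2 q.1 := by
  simp only [PseudoRel, zero_apply, min_lt_iff, lt_irrefl, or_false,
    and_true, map_sub, sub_neg, sub_eq_zero]
  exact le_iff_lt_or_eq.symm

theorem zeros_pPolar_eq_biInter (T : Set (X × StrongDual ℝ X)) :
    zeros (pPolar T) = ⋂ q ∈ T, {x | q.2 x ≤ q.2 q.1} := by
  ext x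
  simp only [zeros, pPolar, Set.mem_ofPred_eq, Set.mem_iInter₂, pseudoRel_zero_left_iff]

end ZerosOfPolar

theorem isClosed_toWeakSpace_image_setOf_le {E : Type*} [AddCommGroup E] [Module ℝ E]
    [TopologicalSpace E] (f : StrongDual ℝ E) (c : ℝ) :
    IsClosed (toWeakSpace ℝ E '' {x | f x ≤ c}) := by
  rw [LinearEquiv.image_eq_preimage_symm]
  exact isClosed_Iic.preimage (WeakBilin.eval_continuous _ f)

theorem zeros_pPolar_convex_weaklyClosed
    {X : Type*} [NormedAddCommGroup X] [NormedSpace ℝ X]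
    (T : Set (X × StrongDual ℝ X)) :
    Convex ℝ (zeros (pPolar T)) ∧
      IsClosed (toWeakSpace ℝ X '' zeros (pPolar T)) := by
  rw [zeros_pPolar_eq_biInter]
  refine ⟨convex_iInter₂ fun q _ => convex_halfSpace_le q.2.toLinearMap.isLinear _, ?_⟩
  rw [Set.image_iInter₂ (toWeakSpace ℝ X).bijective]
  exact isClosed_biInter fun q _ => isClosed_toWeakSpace_image_setOf_le q.2 _
end

section
/- Let T : X ⇉ X* be a multivalued operator. Then (cone_∘(T))^ρ = T^ρ = cone_∘(T^ρ); in particular T^ρ(x) is a cone for all x ∈ X. Moreover T^ρ(x) is a convex set for all x ∈ X. -/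
open NormedSpace

/-!
Whether `(x,x*) ∼_p (y,y*)` holds depends only on the signs of `⟨x - y, y*⟩` and `⟨y - x, x*⟩`,
so it is unchanged when `x*` or `y*` is multiplied by a positive scalar. For fixed `x` and
`(y,y*)`, the admissible `x*` form all of `X*` if `⟨x - y, y*⟩ < 0`, the closed half-space
`⟨y - x, x*⟩ ≤ 0` if it vanishes, and the open half-space `⟨y - x, x*⟩ < 0` if it is positive;
`T^ρ(x)` is an intersection of such convex sets.
-/

section PseudoPolar

variable {X : Type*} [NormedAddCommGroup X] [NormedSpace ℝ X]

lemma pseudoRel_comm {p q : X × StrongDual ℝ X} : PseudoRel p q ↔ PseudoRel q p := by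
  simp only [PseudoRel, min_comm, and_comm]

lemma pseudoRel_iff {p q : X × StrongDual ℝ X} :
    PseudoRel p q ↔ (0 ≤ q.2 (p.1 - q.1) → p.2 (q.1 - p.1) ≤ 0) ∧
      (0 < q.2 (p.1 - q.1) → p.2 (q.1 - p.1) < 0) := by
  rw [PseudoRel, min_lt_iff]
  constructor
  · rintro ((ha | hb) | ⟨ha, hb⟩)
    · exact ⟨fun h => absurd h ha.not_ge, fun h => absurd h ha.not_gt⟩
    · exact ⟨fun _ => hb.le, fun _ => hb⟩
    · exact ⟨fun _ => hb.le, fun h => absurd ha h.ne'⟩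
  · rintro ⟨hle, hlt⟩
    rcases lt_trichotomy (q.2 (p.1 - q.1)) 0 with ha | ha | ha
    · exact Or.inl (Or.inl ha)
    · rcases (hle ha.ge).lt_or_eq with hb | hb
      exacts [Or.inl (Or.inr hb), Or.inr ⟨ha, hb⟩]
    · exact Or.inl (Or.inr (hlt ha))

lemma pseudoRel_smul_left_iff {x : X} {x' : StrongDual ℝ X} {q : X × StrongDual ℝ X} {t : ℝ}
    (ht : 0 < t) : PseudoRel (x, t • x') q ↔ PseudoRel (x, x') q := by
  simp only [pseudoRel_iff, FunLike.coe_smul, Pi.smul_apply,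
    smul_nonpos_iff_nonpos_of_pos_left ht, smul_neg_iff_of_pos_left ht]

lemma pseudoRel_smul_right_iff {p : X × StrongDual ℝ X} {y : X} {y' : StrongDual ℝ X} {t : ℝ}
    (ht : 0 < t) : PseudoRel p (y, t • y') ↔ PseudoRel p (y, y') := by
  rw [pseudoRel_comm, pseudoRel_smul_left_iff ht, pseudoRel_comm]

lemma convex_setOf_pseudoRel (x : X) (q : X × StrongDual ℝ X) :
    Convex ℝ {x' : StrongDual ℝ X | PseudoRel (x, x') q} := by
  have hlin : IsLinearMap ℝ fun x' : StrongDual ℝ X => x' (q.1 - x) :=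
    ⟨fun _ _ => rfl, fun _ _ => rfl⟩
  have hset : {x' : StrongDual ℝ X | PseudoRel (x, x') q} =
      {x' | 0 ≤ q.2 (x - q.1) → x' (q.1 - x) ≤ 0} ∩ {x' | 0 < q.2 (x - q.1) → x' (q.1 - x) < 0} :=
    Set.ext fun _ => pseudoRel_iff
  rw [hset]
  refine Convex.inter ?_ ?_
  · by_cases h : 0 ≤ q.2 (x - q.1)
    · simp only [h, true_implies]
      exact convex_halfSpace_le hlin 0
    · simp only [h, false_implies, Set.ofPred_true]
      exact convex_univ
  · by_cases h : 0 < q.2 (x - q.1)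
    · simp only [h, true_implies]
      exact convex_halfSpace_lt hlin 0
    · simp only [h, false_implies, Set.ofPred_true]
      exact convex_univ

lemma pPolar_anti {S T : Set (X × StrongDual ℝ X)} (h : S ⊆ T) : pPolar T ⊆ pPolar S :=
  fun _ hp q hq => hp q (h hq)

lemma subset_coneOp (T : Set (X × StrongDual ℝ X)) : T ⊆ coneOp T :=
  fun p hp => ⟨1, one_pos, p.2, hp, (one_smul ℝ p.2).symm⟩

lemma coneOp_eq_self {T : Set (X × StrongDual ℝ X)}
    (hT : ∀ x : X, ∀ t : ℝ, 0 < t → ∀ v ∈ img T x, t • v ∈ img T x) : coneOp T = T := by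
  refine (subset_coneOp T).antisymm' ?_
  rintro ⟨x, w⟩ ⟨t, ht, v, hv, rfl⟩
  exact hT x t ht v hv

lemma smul_mem_img_pPolar {T : Set (X × StrongDual ℝ X)} {x : X} {t : ℝ} (ht : 0 < t)
    {v : StrongDual ℝ X} (hv : v ∈ img (pPolar T) x) : t • v ∈ img (pPolar T) x :=
  fun q hq => (pseudoRel_smul_left_iff ht).mpr (hv q hq)

lemma pPolar_coneOp (T : Set (X × StrongDual ℝ X)) : pPolar (coneOp T) = pPolar T := by
  refine (pPolar_anti (subset_coneOp T)).antisymm ?_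
  rintro p hp ⟨y, w⟩ ⟨t, ht, v, hv, rfl⟩
  exact (pseudoRel_smul_right_iff ht).mpr (hp (y, v) hv)

lemma img_pPolar_eq_iInter (T : Set (X × StrongDual ℝ X)) (x : X) :
    img (pPolar T) x = ⋂ q ∈ T, {x' : StrongDual ℝ X | PseudoRel (x, x') q} := by
  ext x'
  simp only [img, pPolar, Set.mem_ofPred_eq, Set.mem_iInter]

lemma convex_img_pPolar (T : Set (X × StrongDual ℝ X)) (x : X) :
    Convex ℝ (img (pPolar T) x) := by
  rw [img_pPolar_eq_iInter]
  exact convex_iInter₂ fun q _ => convex_setOf_pseudoRel x q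

end PseudoPolar

theorem pPolar_cone_properties
    {X : Type*} [NormedAddCommGroup X] [NormedSpace ℝ X]
    (T : Set (X × StrongDual ℝ X)) :
    pPolar (coneOp T) = pPolar T ∧ coneOp (pPolar T) = pPolar T ∧
    (∀ x : X, ∀ t : ℝ, 0 < t → ∀ v ∈ img (pPolar T) x, t • v ∈ img (pPolar T) x) ∧
    (∀ x : X, Convex ℝ (img (pPolar T) x)) := by
  have hcone : ∀ x : X, ∀ t : ℝ, 0 < t → ∀ v ∈ img (pPolar T) x, t • v ∈ img (pPolar T) x :=
    fun _ _ ht _ hv => smul_mem_img_pPolar ht hv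
  exact ⟨pPolar_coneOp T, coneOp_eq_self hcone, hcone, convex_img_pPolar T⟩
end

section
/- Let T : X ⇉ X* be a multivalued operator. If the convex hull of dom(T) is contained in dom(T^ρ), then T is pseudomonotone. In particular, if dom(T^ρ) = X then T is pseudomonotone. -/
open NormedSpace

section PseudoRelSegment

variable {X : Type*} [NormedAddCommGroup X] [NormedSpace ℝ X]

theorem not_pseudoRel_iff {p q : X × StrongDual ℝ X} :
    ¬ PseudoRel p q ↔ 0 ≤ q.2 (p.1 - q.1) ∧ 0 ≤ p.2 (q.1 - p.1) ∧
      (0 < q.2 (p.1 - q.1) ∨ 0 < p.2 (q.1 - p.1)) := by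
  unfold PseudoRel
  rw [min_lt_iff]
  constructor
  · intro h
    push Not at h
    obtain ⟨⟨hA, hB⟩, hAB⟩ := h
    exact ⟨hA, hB, by by_contra! h'; exact hAB (le_antisymm h'.1 hA) (le_antisymm h'.2 hB)⟩
  · rintro ⟨hA, hB, hAB⟩ ((h | h) | ⟨h₁, h₂⟩) <;> rcases hAB with hAB | hAB <;> linarith

theorem PseudoRel.of_openSegment {p q : X × StrongDual ℝ X} {z : X} (hz : z ∈ openSegment ℝ p.1 q.1)
    (z' : StrongDual ℝ X) (hp : PseudoRel (z, z') p) (hq : PseudoRel (z, z') q) :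
    PseudoRel p q := by
  obtain ⟨a, b, ha, hb, hab, rfl⟩ := hz
  by_contra hunrel
  obtain ⟨hqp, hpq, hne⟩ := not_pseudoRel_iff.1 hunrel
  have hzp : a • p.1 + b • q.1 - p.1 = b • (q.1 - p.1) := by
    linear_combination (norm := module) hab • p.1
  have hzq : a • p.1 + b • q.1 - q.1 = a • (p.1 - q.1) := by
    linear_combination (norm := module) hab • q.1
  have hpz : p.1 - (a • p.1 + b • q.1) = -(b • (q.1 - p.1)) := by
    rw [← neg_sub, hzp]
  have hqz : q.1 - (a • p.1 + b • q.1) = -(a • (p.1 - q.1)) := by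
    rw [← neg_sub, hzq]
  have hqp' : z' (p.1 - q.1) = -z' (q.1 - p.1) := by
    rw [← map_neg, neg_sub]
  unfold PseudoRel at hp hq
  simp only [hzp, hzq, hpz, hqz, map_neg, map_smul, smul_eq_mul, hqp', min_lt_iff] at hp hq
  -- With `c = z' (q.1 - p.1)`, relatedness to `p` forces `c > 0` and relatedness to `q` forces
  -- `c < 0`, unless the pairing of `p` (resp. `q`) vanishes along with `c`.
  rcases hne with hA | hB
  · rcases hp with (hp | hp) | ⟨hp₁, hp₂⟩ <;> rcases hq with (hq | hq) | ⟨hq₁, hq₂⟩ <;>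
      nlinarith [mul_pos ha hA, mul_nonneg hb.le hpq]
  · rcases hp with (hp | hp) | ⟨hp₁, hp₂⟩ <;> rcases hq with (hq | hq) | ⟨hq₁, hq₂⟩ <;>
      nlinarith [mul_pos hb hB, mul_nonneg ha.le hqp]

end PseudoRelSegment

theorem pseudomonotone_of_convexHull_dom_subset
    {X : Type*} [NormedAddCommGroup X] [NormedSpace ℝ X]
    (T : Set (X × StrongDual ℝ X)) :
    (convexHull ℝ (opDom T) ⊆ opDom (pPolar T) → Pseudomonotone T) ∧
    (opDom (pPolar T) = Set.univ → Pseudomonotone T) := by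
  have key : convexHull ℝ (opDom T) ⊆ opDom (pPolar T) → Pseudomonotone T := by
    intro hsub p hp q hq
    have hmid : midpoint ℝ p.1 q.1 ∈ convexHull ℝ (opDom T) :=
      (convex_convexHull ℝ _).midpoint_mem (subset_convexHull ℝ _ ⟨p.2, hp⟩)
        (subset_convexHull ℝ _ ⟨q.2, hq⟩)
    obtain ⟨z', hz'⟩ := hsub hmid
    exact .of_openSegment (midpoint_mem_openSegment _ _) z' (hz' p hp) (hz' q hq)
  exact ⟨key, fun h => key (h ▸ Set.subset_univ _)⟩
end

section
/- Let T : X ⇉ X* be a monotone operator. Then T is maximal pseudomonotone if, and only if, T = X × {0}. -/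
open NormedSpace

/-!
A maximal pseudomonotone operator is a cone in the dual variable: scaling `x*` by `t > 0`
preserves every pseudomonotone relation, so maximality puts `(x, t x*)` back into `T`.
If `T` is also monotone, letting `t → 0` in `⟨x - y, t x* - y*⟩ ≥ 0` gives `⟨x - y, y*⟩ ≤ 0`
on `T`. Then for `(y, y*) ∈ T` and `⟨u, y*⟩ > 0` the pair `(y + u, y*)` is strictly related to
all of `T`, hence lies in `T`, which forces `⟨u, y*⟩ ≤ 0`; so `y* = 0`, and maximality gives
`T = X × {0}`.
-/

open Set Filter Topology

section

variable {X : Type*} [NormedAddCommGroup X] [NormedSpace ℝ X]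

lemma StrongDual.eq_zero_of_forall_apply_nonpos {f : StrongDual ℝ X} (h : ∀ w, f w ≤ 0) :
    f = 0 := by
  ext w
  have := h (-w)
  rw [map_neg] at this
  exact le_antisymm (h w) (by simp only [zero_apply]; linarith)

lemma Real.nonpos_of_forall_pos_le_mul {c d : ℝ} (h : ∀ t : ℝ, 0 < t → d ≤ t * c) : d ≤ 0 := by
  have hlim : Tendsto (fun t : ℝ => t * c) (𝓝[>] 0) (𝓝 0) := by
    simpa using ((continuous_mul_const c).tendsto 0).mono_left nhdsWithin_le_nhds
  exact ge_of_tendsto hlim (eventually_nhdsWithin_of_forall h)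

namespace PseudoRel

lemma refl (p : X × StrongDual ℝ X) : PseudoRel p p :=
  Or.inr ⟨by simp, by simp⟩

lemma symm {p q : X × StrongDual ℝ X} (h : PseudoRel p q) : PseudoRel q p := by
  rcases h with h | ⟨h₁, h₂⟩
  · exact Or.inl (by rwa [min_comm])
  · exact Or.inr ⟨h₂, h₁⟩

lemma of_apply_neg {p q : X × StrongDual ℝ X} (h : p.2 (q.1 - p.1) < 0) : PseudoRel p q :=
  Or.inl (min_lt_iff.2 (Or.inr h))

lemma smul_left {p q : X × StrongDual ℝ X} (h : PseudoRel p q) {t : ℝ} (ht : 0 < t) :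
    PseudoRel (p.1, t • p.2) q := by
  rcases h with h | ⟨h₁, h₂⟩
  · refine Or.inl (min_lt_iff.2 ?_)
    rcases min_lt_iff.1 h with h | h
    · exact Or.inl h
    · exact Or.inr (by simpa using mul_neg_of_pos_of_neg ht h)
  · exact Or.inr ⟨h₁, by simp [h₂]⟩

lemma apply_nonpos_of_zero {p : X × StrongDual ℝ X} {y : X} (h : PseudoRel p (y, 0)) :
    p.2 (y - p.1) ≤ 0 := by
  rcases h with h | ⟨-, h⟩
  · exact ((min_lt_iff.1 h).resolve_left (by simp)).le
  · exact h.le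

end PseudoRel

lemma Pseudomonotone.insert {T : Set (X × StrongDual ℝ X)} (hT : Pseudomonotone T)
    {p : X × StrongDual ℝ X} (hp : p ∈ pPolar T) : Pseudomonotone (insert p T) := by
  rintro q (rfl | hq) r (rfl | hr)
  · exact .refl _
  · exact hp r hr
  · exact (hp q hq).symm
  · exact hT q hq r hr

lemma pseudomonotone_univ_prod_zero :
    Pseudomonotone (univ ×ˢ ({0} : Set (StrongDual ℝ X))) := by
  rintro ⟨x, x'⟩ ⟨-, rfl : x' = 0⟩ ⟨y, y'⟩ ⟨-, rfl : y' = 0⟩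
  exact Or.inr ⟨by simp, by simp⟩

lemma maxPseudomonotone_univ_prod_zero :
    MaxPseudomonotone (univ ×ˢ ({0} : Set (StrongDual ℝ X))) := by
  refine ⟨pseudomonotone_univ_prod_zero, fun S hsub hS => hsub.antisymm ?_⟩
  rintro ⟨x, x'⟩ hx
  refine ⟨trivial, StrongDual.eq_zero_of_forall_apply_nonpos fun w => ?_⟩
  have hrel := hS _ hx (x + w, 0) (hsub ⟨trivial, rfl⟩)
  simpa using hrel.apply_nonpos_of_zero

namespace MaxPseudomonotone

variable {T : Set (X × StrongDual ℝ X)}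

lemma pPolar_subset (hT : MaxPseudomonotone T) : pPolar T ⊆ T := fun p hp => by
  rw [hT.2 _ (subset_insert p T) (hT.1.insert hp)]
  exact mem_insert p T

lemma smul_mem (hT : MaxPseudomonotone T) {p : X × StrongDual ℝ X} (hp : p ∈ T) {t : ℝ}
    (ht : 0 < t) : (p.1, t • p.2) ∈ T :=
  hT.pPolar_subset fun q hq => (hT.1 p hp q hq).smul_left ht

lemma snd_eq_zero (hT : MaxPseudomonotone T)
    (hnormal : ∀ p ∈ T, ∀ q ∈ T, q.2 (p.1 - q.1) ≤ 0) {p : X × StrongDual ℝ X} (hp : p ∈ T) :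
    p.2 = 0 := by
  obtain ⟨y, y'⟩ := p
  refine StrongDual.eq_zero_of_forall_apply_nonpos fun u => ?_
  by_contra! hu
  have hrel : (y + u, y') ∈ pPolar T := fun q hq =>
    PseudoRel.of_apply_neg <| by
      have := hnormal q hq _ hp
      simp only [map_sub, map_add] at this ⊢
      linarith
  exact hu.not_ge (by simpa using hnormal _ (hT.pPolar_subset hrel) _ hp)

end MaxPseudomonotone

lemma MonotoneOp.apply_sub_nonpos_of_smul_mem {T : Set (X × StrongDual ℝ X)}
    (hT : MonotoneOp T) (hcone : ∀ p ∈ T, ∀ t : ℝ, 0 < t → (p.1, t • p.2) ∈ T)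
    {p q : X × StrongDual ℝ X} (hp : p ∈ T) (hq : q ∈ T) : q.2 (p.1 - q.1) ≤ 0 :=
  Real.nonpos_of_forall_pos_le_mul (c := p.2 (p.1 - q.1)) fun t ht => by
    have := hT _ (hcone p hp t ht) q hq
    simp only [sub_apply, smul_apply, smul_eq_mul] at this
    linarith

end

theorem monotone_maxPseudomonotone_iff
    {X : Type*} [NormedAddCommGroup X] [NormedSpace ℝ X]
    (T : Set (X × StrongDual ℝ X)) (hT : MonotoneOp T) :
    MaxPseudomonotone T ↔ T = Set.univ ×ˢ ({0} : Set (StrongDual ℝ X)) := by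
  refine ⟨fun hmax => ?_, fun h => h ▸ maxPseudomonotone_univ_prod_zero⟩
  have hnormal : ∀ p ∈ T, ∀ q ∈ T, q.2 (p.1 - q.1) ≤ 0 := fun p hp q hq =>
    hT.apply_sub_nonpos_of_smul_mem (fun p hp t ht => hmax.smul_mem hp ht) hp hq
  have hsub : T ⊆ univ ×ˢ {0} := fun p hp => ⟨trivial, hmax.snd_eq_zero hnormal hp⟩
  exact hmax.2 _ hsub pseudomonotone_univ_prod_zero
end

section
/- Let T, S : X ⇉ X* be two pseudomonotone operators such that T ⊂ S. If T is pre-maximal pseudomonotone, then S is pre-maximal pseudomonotone and T^ρ = S^ρ. -/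
open NormedSpace

/-!
A pseudomonotone extension `S` of `T` lies in `T^ρ`. Polars reverse inclusions, so
`S^ρ ⊆ T^ρ`; conversely, pseudomonotonicity of `T^ρ` makes every element of `T^ρ` related to
every element of `S ⊆ T^ρ`, i.e. `T^ρ ⊆ S^ρ`. Hence `S^ρ = T^ρ` is pseudomonotone.
-/

section PseudomonotonePolar

variable {X : Type*} [NormedAddCommGroup X] [NormedSpace ℝ X]
  {T S : Set (X × StrongDual ℝ X)}

theorem pPolar_anti_s14 (hTS : T ⊆ S) : pPolar S ⊆ pPolar T :=
  fun _ hp q hq => hp q (hTS hq)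

theorem Pseudomonotone.subset_pPolar_of_subset (hS : Pseudomonotone S) (hTS : T ⊆ S) :
    S ⊆ pPolar T :=
  fun p hp q hq => hS p hp q (hTS hq)

theorem Pseudomonotone.pPolar_subset_pPolar (hT : Pseudomonotone (pPolar T))
    (hS : S ⊆ pPolar T) : pPolar T ⊆ pPolar S :=
  fun p hp q hq => hT p hp q (hS hq)

theorem pPolar_eq_of_subset (hT : Pseudomonotone (pPolar T)) (hS : Pseudomonotone S)
    (hTS : T ⊆ S) : pPolar T = pPolar S :=
  (hT.pPolar_subset_pPolar (hS.subset_pPolar_of_subset hTS)).antisymm (pPolar_anti_s14 hTS)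

end PseudomonotonePolar

theorem preMax_of_subset_general
    {X : Type*} [NormedAddCommGroup X] [NormedSpace ℝ X]
    (T S : Set (X × StrongDual ℝ X)) (hS : Pseudomonotone S)
    (hTS : T ⊆ S) (hpre : PreMaxPseudomonotone T) :
    PreMaxPseudomonotone S ∧ pPolar T = pPolar S := by
  have hpolar : pPolar T = pPolar S := pPolar_eq_of_subset hpre.2 hS hTS
  exact ⟨⟨hS, hpolar ▸ hpre.2⟩, hpolar⟩

theorem preMax_of_subset
    {X : Type*} [NormedAddCommGroup X] [NormedSpace ℝ X]
    (T S : Set (X × StrongDual ℝ X)) (hT : Pseudomonotone T) (hS : Pseudomonotone S)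
    (hTS : T ⊆ S) (hpre : PreMaxPseudomonotone T) :
    PreMaxPseudomonotone S ∧ pPolar T = pPolar S :=
  preMax_of_subset_general T S hS hTS hpre
end
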